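/- Fix θ > 0, and let h_θ(x) = x·Ψ(g_θ^{-1}(x)) + Ψ(θ - g_θ^{-1}(x)) for x ∈ (0,∞). Then h_θ'(x) = Ψ(g_θ^{-1}(x)) for all x > 0; in particular h_θ' is strictly increasing on (0,∞) and h_θ'(1) = Ψ(θ/2). -/

import Mathlib

/-!
`h_θ(x)` is the maximum over `w ∈ (0, θ)` of the affine functions `x ↦ x Ψ(w) + Ψ(θ - w)`,
attained at `w = u(x)`: the `w`-derivative is `Ψ'(w) (x - g_θ(w))`, which changes sign from
positive to negative at `u(x)` because `g_θ` is increasing. An upper envelope of affine functions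
is differentiable wherever the slope `Ψ(u(x))` of the maximiser is continuous, with that slope as
derivative, and `u` is continuous as the inverse of a strictly monotone function. No
differentiability of `u` is needed.
-/

open Real Set

/-- The digamma function, defined by its series representation. -/
noncomputable def digamma (z : ℝ) : ℝ :=
  -Real.eulerMascheroniConstant + ∑' n : ℕ, (1 / ((n : ℝ) + 1) - 1 / ((n : ℝ) + z))

/-- The function `g_θ(z) = (Σ_{n≥0} 1/(n+θ-z)²)/(Σ_{n≥0} 1/(n+z)²)`. -/
noncomputable def gFun (θ z : ℝ) : ℝ :=
  (∑' n : ℕ, 1 / ((n : ℝ) + θ - z) ^ 2) / (∑' n : ℕ, 1 / ((n : ℝ) + z) ^ 2)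

open Filter Topology Asymptotics

noncomputable def trigamma (z : ℝ) : ℝ := ∑' n : ℕ, 1 / ((n : ℝ) + z) ^ 2

theorem summable_one_div_nat_add_sq (a : ℝ) :
    Summable fun n : ℕ => 1 / ((n : ℝ) + a) ^ 2 := by
  simpa [Real.rpow_two, sq_abs] using (Real.summable_one_div_nat_add_rpow a 2).2 one_lt_two

theorem trigamma_pos {z : ℝ} (hz : 0 < z) : 0 < trigamma z :=
  (summable_one_div_nat_add_sq z).tsum_pos (fun n => by positivity) 0
    (one_div_pos.2 (pow_pos (by simpa using hz) 2))

theorem trigamma_strictAntiOn : StrictAntiOn trigamma (Ioi 0) := by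
  intro a ha b _ hab
  have hlt : ∀ n : ℕ, 1 / ((n : ℝ) + b) ^ 2 < 1 / ((n : ℝ) + a) ^ 2 := fun n => by
    have : (0 : ℝ) < n + a := add_pos_of_nonneg_of_pos n.cast_nonneg ha
    gcongr
  exact (summable_one_div_nat_add_sq b).tsum_lt_tsum (fun n => (hlt n).le) (hlt 0)
    (summable_one_div_nat_add_sq a)

theorem hasDerivAt_digamma {z : ℝ} (hz : 0 < z) : HasDerivAt digamma (trigamma z) z := by
  obtain ⟨ε, hε, hεmin⟩ := exists_between (lt_min one_pos hz)
  have hterm : ∀ (n : ℕ) (y : ℝ), y ∈ Ioi ε →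
      HasDerivAt (fun y => 1 / ((n : ℝ) + 1) - 1 / ((n : ℝ) + y)) (1 / ((n : ℝ) + y) ^ 2) y := by
    intro n y hy
    have hne : (n : ℝ) + y ≠ 0 := (add_pos_of_nonneg_of_pos n.cast_nonneg (hε.trans hy)).ne'
    simpa [one_div, neg_div] using
      (((hasDerivAt_id' y).const_add (n : ℝ)).inv hne).const_sub (1 / ((n : ℝ) + 1))
  have hbound : ∀ (n : ℕ) (y : ℝ), y ∈ Ioi ε →
      ‖1 / ((n : ℝ) + y) ^ 2‖ ≤ 1 / ((n : ℝ) + ε) ^ 2 := by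
    intro n y hy
    have : ε < y := hy
    rw [norm_of_nonneg (by positivity)]
    gcongr
  -- the terms vanish at `1`; this gives summability on all of `Ioi ε`
  have hseries := hasDerivAt_tsum_of_isPreconnected (summable_one_div_nat_add_sq ε) isOpen_Ioi
    isPreconnected_Ioi hterm hbound (y₀ := 1) (hεmin.trans_le (min_le_left _ _)) (by simp)
    (hεmin.trans_le (min_le_right _ _))
  exact hseries.const_add _

theorem digamma_strictMonoOn : StrictMonoOn digamma (Ioi 0) := by
  refine strictMonoOn_of_deriv_pos (convex_Ioi 0)
    (fun z hz => (hasDerivAt_digamma hz).continuousAt.continuousWithinAt) fun z hz => ?_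
  rw [interior_Ioi] at hz
  rw [(hasDerivAt_digamma hz).deriv]
  exact trigamma_pos hz

theorem gFun_eq_div (θ z : ℝ) : gFun θ z = trigamma (θ - z) / trigamma z := by
  unfold gFun trigamma
  simp only [add_sub_assoc]

theorem gFun_pos {θ z : ℝ} (hz : z ∈ Ioo 0 θ) : 0 < gFun θ z := by
  rw [gFun_eq_div]
  exact div_pos (trigamma_pos (sub_pos.2 hz.2)) (trigamma_pos hz.1)

theorem gFun_strictMonoOn (θ : ℝ) : StrictMonoOn (gFun θ) (Ioo 0 θ) := by
  intro a ha b hb hab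
  have hθb : 0 < θ - b := sub_pos.2 hb.2
  rw [gFun_eq_div, gFun_eq_div]
  calc trigamma (θ - a) / trigamma a
      < trigamma (θ - b) / trigamma a :=
        div_lt_div_of_pos_right (trigamma_strictAntiOn hθb (mem_Ioi.2 (by linarith)) (by linarith))
          (trigamma_pos ha.1)
    _ < trigamma (θ - b) / trigamma b :=
        div_lt_div_of_pos_left (trigamma_pos hθb) (trigamma_pos hb.1)
          (trigamma_strictAntiOn ha.1 hb.1 hab)

theorem gFun_half {θ : ℝ} (hθ : 0 < θ) : gFun θ (θ / 2) = 1 := by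
  rw [gFun_eq_div, sub_half, div_self (trigamma_pos (half_pos hθ)).ne']

theorem hasDerivAt_mul_digamma_add_digamma_sub {θ y w : ℝ} (hw : w ∈ Ioo 0 θ) :
    HasDerivAt (fun w => y * digamma w + digamma (θ - w)) (trigamma w * (y - gFun θ w)) w := by
  refine (((hasDerivAt_digamma hw.1).const_mul y).add
    ((hasDerivAt_digamma (sub_pos.2 hw.2)).comp w ((hasDerivAt_id w).const_sub θ))).congr_deriv ?_
  rw [gFun_eq_div]
  field_simp [(trigamma_pos hw.1).ne']
  ring

theorem isMaxOn_mul_digamma_add_digamma_sub {θ b : ℝ} (hb : b ∈ Ioo 0 θ) :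
    IsMaxOn (fun w => gFun θ b * digamma w + digamma (θ - w)) (Ioo 0 θ) b := by
  set φ := fun w => gFun θ b * digamma w + digamma (θ - w)
  have hφ : ∀ w ∈ Ioo 0 θ, HasDerivAt φ (trigamma w * (gFun θ b - gFun θ w)) w :=
    fun w hw => hasDerivAt_mul_digamma_add_digamma_sub hw
  have hcont : ContinuousOn φ (Ioo 0 θ) :=
    fun w hw => (hφ w hw).continuousAt.continuousWithinAt
  refine isMaxOn_iff.2 fun w hw => ?_
  rcases le_or_gt w b with hwb | hbw
  · have hmono : StrictMonoOn φ (Ioc 0 b) :=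
      strictMonoOn_of_deriv_pos (convex_Ioc 0 b) (hcont.mono (Ioc_subset_Ioo_right hb.2))
        fun v hv => by
          rw [interior_Ioc] at hv
          have hvθ : v ∈ Ioo 0 θ := ⟨hv.1, hv.2.trans hb.2⟩
          rw [(hφ v hvθ).deriv]
          exact mul_pos (trigamma_pos hv.1) (sub_pos.2 (gFun_strictMonoOn θ hvθ hb hv.2))
    exact hmono.monotoneOn ⟨hw.1, hwb⟩ ⟨hb.1, le_rfl⟩ hwb
  · have hanti : StrictAntiOn φ (Ico b θ) :=
      strictAntiOn_of_deriv_neg (convex_Ico b θ) (hcont.mono (Ico_subset_Ioo_left hb.1))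
        fun v hv => by
          rw [interior_Ico] at hv
          have hvθ : v ∈ Ioo 0 θ := ⟨hb.1.trans hv.1, hv.2⟩
          rw [(hφ v hvθ).deriv]
          exact mul_neg_of_pos_of_neg (trigamma_pos hvθ.1)
            (sub_neg.2 (gFun_strictMonoOn θ hb hvθ hv.1))
    exact hanti.antitoneOn ⟨le_rfl, hb.2⟩ ⟨hbw.le, hw.2⟩ hbw.le

/-- Near `x`, `y ↦ y * p y + q y` is the upper envelope of the affine functions
`y ↦ y * p z + q z`. -/
theorem hasDerivAt_mul_add_of_eventually_le {p q : ℝ → ℝ} {x : ℝ} (hp : ContinuousAt p x)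
    (hle : ∀ᶠ y in 𝓝 x, y * p x + q x ≤ y * p y + q y ∧ x * p y + q y ≤ x * p x + q x) :
    HasDerivAt (fun y => y * p y + q y) (p x) x := by
  rw [hasDerivAt_iff_isLittleO]
  have hsmall : (fun y => (y - x) * (p y - p x)) =o[𝓝 x] fun y => y - x := by
    simpa using (isBigO_refl (fun y => y - x) (𝓝 x)).mul_isLittleO
      (isLittleO_one_iff ℝ |>.2 (by simpa using hp.sub_const (p x)))
  refine IsBigO.trans_isLittleO (IsBigO.of_bound' ?_) hsmall
  filter_upwards [hle] with y ⟨hlow, hupp⟩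
  simp only [Real.norm_eq_abs, smul_eq_mul]
  exact abs_le_abs_of_nonneg (by linarith) (by linarith)

def IsGFunInv (θ : ℝ) (u : ℝ → ℝ) : Prop :=
  ∀ x : ℝ, 0 < x → u x ∈ Ioo 0 θ ∧ gFun θ (u x) = x

namespace IsGFunInv

variable {θ : ℝ} {u : ℝ → ℝ} (hu : IsGFunInv θ u)
include hu

theorem apply_gFun {w : ℝ} (hw : w ∈ Ioo 0 θ) : u (gFun θ w) = w :=
  (gFun_strictMonoOn θ).injOn (hu _ (gFun_pos hw)).1 hw (hu _ (gFun_pos hw)).2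

theorem apply_one : u 1 = θ / 2 := by
  have hθ : 0 < θ := (hu 1 one_pos).1.1.trans (hu 1 one_pos).1.2
  rw [← gFun_half hθ, hu.apply_gFun ⟨half_pos hθ, half_lt_self hθ⟩]

theorem strictMonoOn : StrictMonoOn u (Ioi 0) := fun x hx y hy hxy => by
  rwa [← (gFun_strictMonoOn θ).lt_iff_lt (hu x hx).1 (hu y hy).1, (hu x hx).2, (hu y hy).2]

theorem continuousAt {x : ℝ} (hx : 0 < x) : ContinuousAt u x := by
  refine continuousAt_of_monotoneOn_of_image_mem_nhds hu.strictMonoOn.monotoneOn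
    (Ioi_mem_nhds hx) (mem_of_superset (Ioo_mem_nhds (hu x hx).1.1 (hu x hx).1.2) ?_)
  exact fun w hw => ⟨gFun θ w, gFun_pos hw, hu.apply_gFun hw⟩

theorem hasDerivAt {x : ℝ} (hx : 0 < x) :
    HasDerivAt (fun y => y * digamma (u y) + digamma (θ - u y)) (digamma (u x)) x := by
  have hmax : ∀ {y z : ℝ}, 0 < y → 0 < z →
      y * digamma (u z) + digamma (θ - u z) ≤ y * digamma (u y) + digamma (θ - u y) :=
    fun {y z} hy hz => by
      simpa [(hu y hy).2] using isMaxOn_mul_digamma_add_digamma_sub (hu y hy).1 (hu z hz).1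
  refine hasDerivAt_mul_add_of_eventually_le
    ((hasDerivAt_digamma (hu x hx).1.1).continuousAt.comp (hu.continuousAt hx)) ?_
  filter_upwards [Ioi_mem_nhds hx] with y hy
  exact ⟨hmax hy hx, hmax hx hy⟩

end IsGFunInv

theorem hTheta_deriv_general (θ : ℝ) (u : ℝ → ℝ)
    (hu : ∀ x : ℝ, 0 < x → u x ∈ Set.Ioo 0 θ ∧ gFun θ (u x) = x) :
    (∀ x ∈ Set.Ioi (0 : ℝ),
      HasDerivAt (fun y => y * digamma (u y) + digamma (θ - u y)) (digamma (u x)) x) ∧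
    StrictMonoOn (fun x => digamma (u x)) (Set.Ioi (0 : ℝ)) ∧
    digamma (u 1) = digamma (θ / 2) := by
  have hinv : IsGFunInv θ u := hu
  refine ⟨fun x hx => hinv.hasDerivAt hx, ?_, by rw [hinv.apply_one]⟩
  exact digamma_strictMonoOn.comp hinv.strictMonoOn fun x hx => (hu x hx).1.1

/-- Let `u = g_θ⁻¹` and `h_θ(x) = x Ψ(u(x)) + Ψ(θ - u(x))`. Then `h_θ'(x) = Ψ(u(x))`
for all `x > 0`; in particular `h_θ'` is strictly increasing on `(0,∞)` and
`h_θ'(1) = Ψ(θ/2)`. -/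
theorem hTheta_deriv (θ : ℝ) (hθ : 0 < θ) (u : ℝ → ℝ)
    (hu : ∀ x : ℝ, 0 < x → u x ∈ Set.Ioo 0 θ ∧ gFun θ (u x) = x) :
    (∀ x ∈ Set.Ioi (0 : ℝ),
      HasDerivAt (fun y => y * digamma (u y) + digamma (θ - u y)) (digamma (u x)) x) ∧
    StrictMonoOn (fun x => digamma (u x)) (Set.Ioi (0 : ℝ)) ∧
    digamma (u 1) = digamma (θ / 2) :=
  hTheta_deriv_general θ u hu
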